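/- arXiv:0902.0709 — 5 statements merged into one kernel-verified Lean document; each statement's English description precedes it below -/
import Mathlib

section
/- Let t ≥ 1 and let x_1 > x_2 > ... > x_t be integers of the same parity (positions on a lattice line). Define H_t(x_1,...,x_t) as the sum over all families of integer configurations x^{(1)}, ..., x^{(t-1)} (with x^{(s)} having s+1 points including fixed virtual particles) of the product over s = 1,...,t-1 of det[φ(x^{(s)}_i, x^{(s+1)}_j)]_{i,j=1}^{s+1}, where φ(x,y) = χ(y > x) and consecutive configurations interlace. Then H_t(x_1,...,x_t) = c_t · Δ(x_1,...,x_t), where Δ is the Vandermonde determinant ∏_{i<j}(x_i − x_j) and c_t = 1/(2^{t(t-1)/2} ∏_{k=1}^{t-1} k!). -/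
/-!
Write `Δ(x) = det V(-x)` for the Vandermonde matrix `V`, and replace the monomials by the monic
polynomials `P_j(z) = z (z - 2) ⋯ (z - 2j + 2)`, so `Δ(x) = det [P_j(-x_i)]`. Summing over the
configurations `y` interlacing `x` from below is, by multilinearity, summing each row over the
interval `x_{i+1} < y_i < x_i`, an arithmetic progression of step `2`. Since
`P_{j+1}(z + 2) - P_{j+1}(z) = 2 (j + 1) P_j(z)`, each row sum telescopes to
`(P_{j+1}(1 - x_{i+1}) - P_{j+1}(1 - x_i)) / (2 (j + 1))`, and these consecutive differences are
what row reduction makes of `[P_j(1 - x_i)]`, whose determinant is `Δ(x)` again. Hence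
`2^t t! ∑_y Δ(y) = Δ(x)`, and induction on `t` gives the constant.
-/

open Finset in
/-- `Hchain t x` is the number of interlacing chains `x⁽¹⁾, …, x⁽ᵗ⁾ = x` of strictly
decreasing integer configurations on the lattice, where `x⁽ˢ⁾` has `s` particles,
consecutive configurations strictly interlace (`x⁽ˢ⁺¹⁾_{i+1} < x⁽ˢ⁾_i < x⁽ˢ⁺¹⁾_i`),
and particles on consecutive lines have opposite parity.  Equivalently, it is the sum
over `x⁽¹⁾, …, x⁽ᵗ⁻¹⁾` of `∏_s det[φ(x⁽ˢ⁾_i, x⁽ˢ⁺¹⁾_j)]` with `φ(x,y) = χ(y > x)`. -/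
noncomputable def Hchain : (t : ℕ) → (Fin t → ℤ) → ℤ
  | 0, _ => 1
  | t + 1, x =>
      ∑ y ∈ Fintype.piFinset (fun i : Fin t =>
        (Finset.Ioo (x i.succ) (x i.castSucc)).filter
          (fun z => ¬ (2 ∣ (z - x i.castSucc)))),
        Hchain t y

open Finset Polynomial Matrix
open scoped Nat

noncomputable def descPochhammerTwo (j : ℕ) : ℤ[X] := ∏ k ∈ range j, (X - C (2 * (k : ℤ)))

namespace descPochhammerTwo

theorem monic (j : ℕ) : (descPochhammerTwo j).Monic :=
  monic_prod_of_monic _ _ fun _ _ => monic_X_sub_C _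

theorem natDegree (j : ℕ) : (descPochhammerTwo j).natDegree = j := by
  rw [descPochhammerTwo, natDegree_prod_of_monic _ _ fun _ _ => monic_X_sub_C _]
  simp only [natDegree_X_sub_C, sum_const, card_range, smul_eq_mul, mul_one]

theorem eval_eq (j : ℕ) (z : ℤ) :
    (descPochhammerTwo j).eval z = ∏ k ∈ range j, (z - 2 * k) := by
  simp [descPochhammerTwo, eval_prod]

theorem eval_add_two_sub_eval (j : ℕ) (z : ℤ) :
    (descPochhammerTwo (j + 1)).eval (z + 2) - (descPochhammerTwo (j + 1)).eval z =
      2 * (j + 1) * (descPochhammerTwo j).eval z := by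
  have shift : ∀ k ∈ range j, z + 2 - 2 * ((k + 1 : ℕ) : ℤ) = z - 2 * k := fun k _ => by
    push_cast; ring
  rw [eval_eq, eval_eq, eval_eq, prod_range_succ', prod_range_succ, prod_congr rfl shift]
  ring

end descPochhammerTwo

theorem sum_Ioo_filter_odd_eq_sub {M : Type*} [AddCommGroup M] {f g : ℤ → M}
    (hfg : ∀ z, g (z + 1) - g (z - 1) = f z) {a b : ℤ} (hab : a ≤ b) (hpar : 2 ∣ b - a) :
    ∑ z ∈ Ioo a b with ¬ 2 ∣ z - b, f z = g b - g a := by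
  obtain ⟨m, rfl⟩ : ∃ m : ℕ, b = a + 2 * m := by
    obtain ⟨c, hc⟩ := hpar
    exact ⟨c.toNat, by omega⟩
  induction m with
  | zero => simp
  | succ m ih =>
    have hset : {z ∈ Ioo a (a + 2 * (m + 1 : ℕ)) | ¬ 2 ∣ z - (a + 2 * (m + 1 : ℕ))} =
        insert (a + 2 * m + 1) {z ∈ Ioo a (a + 2 * m) | ¬ 2 ∣ z - (a + 2 * m)} := by
      ext z
      simp only [mem_filter, mem_Ioo, mem_insert]
      omega
    have hnew : a + 2 * m + 1 ∉ {z ∈ Ioo a (a + 2 * m) | ¬ 2 ∣ z - (a + 2 * m)} := by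
      simp
    rw [hset, sum_insert hnew, ih (by omega) (by simp), ← hfg, add_sub_cancel_right,
      show a + 2 * m + 1 + 1 = a + 2 * (m + 1 : ℕ) by push_cast; ring]
    abel

theorem sum_piFinset_det_of {n α R : Type*} [Fintype n] [DecidableEq n] [CommRing R]
    (S : n → Finset α) (f : α → n → R) :
    ∑ y ∈ Fintype.piFinset S, (of fun i j => f (y i) j).det =
      (of fun i j => ∑ z ∈ S i, f z j).det := by
  have hrows : (fun i => ∑ z ∈ S i, f z) = of fun i j => ∑ z ∈ S i, f z j := by
    ext i j
    exact sum_apply j (S i) f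
  rw [← hrows]
  exact ((detRowAlternating (R := R)).toMultilinearMap.map_sum_finset (fun _ => f) S).symm

theorem det_eq_det_succ_sub_castSucc_of_col_zero_eq_one {R : Type*} [CommRing R] {t : ℕ}
    (M : Matrix (Fin (t + 1)) (Fin (t + 1)) R) (hM : ∀ i, M i 0 = 1) :
    M.det = (of fun i j : Fin t => M i.succ j.succ - M i.castSucc j.succ).det := by
  let D : Matrix (Fin (t + 1)) (Fin (t + 1)) R :=
    of fun i j => Fin.cases (M 0 j) (fun i' => M i'.succ j - M i'.castSucc j) i
  have hMD : M.det = D.det :=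
    det_eq_of_forall_row_eq_smul_add_pred (fun _ => 1) (fun _ => rfl) fun i j => by
      simp [D]
  have hD_col : ∀ i : Fin t, D i.succ 0 = 0 := fun i => by simp [D, hM]
  rw [hMD, det_succ_column_zero, Fin.sum_univ_succ]
  simp [hD_col, D, hM, submatrix]

theorem prod_filter_lt_sub_eq_det_vandermonde_neg {R : Type*} [CommRing R] {n : ℕ}
    (x : Fin n → R) :
    ∏ i : Fin n, ∏ j ∈ univ.filter (fun j => i < j), (x i - x j) =
      (vandermonde fun i => -x i).det := by
  simp [det_vandermonde, filter_lt_eq_Ioi, neg_add_eq_sub]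

theorem det_vandermonde_eq_det_descPochhammerTwo {n : ℕ} (v : Fin n → ℤ) :
    (vandermonde v).det = (of fun i j : Fin n => (descPochhammerTwo j).eval (v i)).det :=
  det_eval_matrixOfPolynomials_eq_det_vandermonde v _
    (fun j => descPochhammerTwo.natDegree j) fun j => descPochhammerTwo.monic j

noncomputable def interlacingInterval {t : ℕ} (x : Fin (t + 1) → ℤ) (i : Fin t) :
    Finset ℤ :=
  {z ∈ Ioo (x i.succ) (x i.castSucc) | ¬ 2 ∣ z - x i.castSucc}

noncomputable def interlacedBelow {t : ℕ} (x : Fin (t + 1) → ℤ) : Finset (Fin t → ℤ) :=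
  Fintype.piFinset (interlacingInterval x)

theorem Hchain_succ {t : ℕ} (x : Fin (t + 1) → ℤ) :
    Hchain (t + 1) x = ∑ y ∈ interlacedBelow x, Hchain t y := by
  rw [Hchain]
  rfl

section interlacedBelow

variable {t : ℕ} {x : Fin (t + 1) → ℤ} {y : Fin t → ℤ}

theorem mem_interlacedBelow :
    y ∈ interlacedBelow x ↔
      ∀ i, x i.succ < y i ∧ y i < x i.castSucc ∧ ¬ 2 ∣ y i - x i.castSucc := by
  simp [interlacedBelow, interlacingInterval, and_assoc]

theorem strictAnti_of_mem_interlacedBelow (hx : Antitone x) (hy : y ∈ interlacedBelow x) :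
    StrictAnti y := by
  rw [mem_interlacedBelow] at hy
  intro a b hab
  calc y b < x b.castSucc := (hy b).2.1
    _ ≤ x a.succ := hx (Fin.succ_le_castSucc_iff.mpr hab)
    _ < y a := (hy a).1

theorem two_dvd_sub_of_mem_interlacedBelow (hpar : ∀ i j, 2 ∣ x i - x j)
    (hy : y ∈ interlacedBelow x) (i j : Fin t) : 2 ∣ y i - y j := by
  rw [mem_interlacedBelow] at hy
  have := hpar i.castSucc j.castSucc
  have := (hy i).2.2
  have := (hy j).2.2
  omega

end interlacedBelow

theorem two_mul_succ_mul_sum_interlacingInterval {t : ℕ} {x : Fin (t + 1) → ℤ}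
    (hx : Antitone x) (hpar : ∀ i j, 2 ∣ x i - x j) (i : Fin t) (j : ℕ) :
    2 * (j + 1) * ∑ z ∈ interlacingInterval x i, (descPochhammerTwo j).eval (-z) =
      (descPochhammerTwo (j + 1)).eval (1 - x i.succ) -
        (descPochhammerTwo (j + 1)).eval (1 - x i.castSucc) := by
  rw [interlacingInterval, mul_sum,
    sum_Ioo_filter_odd_eq_sub (g := fun z => -(descPochhammerTwo (j + 1)).eval (1 - z))
      (fun z => ?_) (hx Fin.castSucc_lt_succ.le) (hpar _ _)]
  · ring
  · rw [← descPochhammerTwo.eval_add_two_sub_eval]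
    ring_nf

theorem two_pow_mul_factorial_mul_sum_interlacedBelow {t : ℕ} {x : Fin (t + 1) → ℤ}
    (hx : Antitone x) (hpar : ∀ i j, 2 ∣ x i - x j) :
    2 ^ t * t ! * ∑ y ∈ interlacedBelow x, (vandermonde fun i => -y i).det =
      (vandermonde fun i => -x i).det := by
  have hconst : (2 : ℤ) ^ t * t ! = ∏ j : Fin t, 2 * ((j : ℤ) + 1) := by
    rw [prod_mul_distrib, prod_const, card_univ, Fintype.card_fin,
      Fin.prod_univ_eq_prod_range (fun k => (k : ℤ) + 1) t, ← prod_range_add_one_eq_factorial]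
    push_cast
    rfl
  calc 2 ^ t * t ! * ∑ y ∈ interlacedBelow x, (vandermonde fun i => -y i).det
      = (∏ j : Fin t, 2 * ((j : ℤ) + 1)) * (of fun i j : Fin t =>
          ∑ z ∈ interlacingInterval x i, (descPochhammerTwo j).eval (-z)).det := by
        simp_rw [det_vandermonde_eq_det_descPochhammerTwo]
        rw [hconst, interlacedBelow, ← sum_piFinset_det_of]
    _ = (of fun i j : Fin t => (descPochhammerTwo (j + 1)).eval (1 - x i.succ) -
          (descPochhammerTwo (j + 1)).eval (1 - x i.castSucc)).det := by
        rw [← det_mul_row]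
        congr 1
        ext i j
        exact two_mul_succ_mul_sum_interlacingInterval hx hpar i j
    _ = (of fun i j : Fin (t + 1) => (descPochhammerTwo j).eval (1 - x i)).det := by
        rw [det_eq_det_succ_sub_castSucc_of_col_zero_eq_one _ fun i => by simp [descPochhammerTwo]]
        rfl
    _ = (vandermonde fun i => -x i).det := by
        rw [← det_vandermonde_eq_det_descPochhammerTwo, ← det_vandermonde_add (fun i => -x i) 1]
        simp only [neg_add_eq_sub]

theorem mul_Hchain_eq_det_vandermonde_neg (t : ℕ) {x : Fin t → ℤ} (hx : Antitone x)
    (hpar : ∀ i j, 2 ∣ x i - x j) :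
    (2 ^ (t * (t - 1) / 2) * ∏ k ∈ range t, (k ! : ℤ)) * Hchain t x =
      (vandermonde fun i => -x i).det := by
  induction t with
  | zero => simp [Hchain]
  | succ t ih =>
    have hconst : (2 : ℤ) ^ ((t + 1) * (t + 1 - 1) / 2) * ∏ k ∈ range (t + 1), (k ! : ℤ) =
        2 ^ t * t ! * (2 ^ (t * (t - 1) / 2) * ∏ k ∈ range t, (k ! : ℤ)) := by
      rw [Nat.triangle_succ, pow_add, prod_range_succ]
      ring
    rw [hconst, Hchain_succ, mul_assoc, mul_sum,
      ← two_pow_mul_factorial_mul_sum_interlacedBelow hx hpar]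
    congr 1
    refine sum_congr rfl fun y hy => ih ?_ ?_
    · exact (strictAnti_of_mem_interlacedBelow hx hy).antitone
    · exact two_dvd_sub_of_mem_interlacedBelow hpar hy

theorem stmt1_general (t : ℕ) (x : Fin t → ℤ) (hx : StrictAnti x)
    (hpar : ∀ i j, (2 : ℤ) ∣ (x i - x j)) :
    (2 ^ (t * (t - 1) / 2) * ∏ k ∈ Finset.range t, (Nat.factorial k : ℤ)) * Hchain t x =
      ∏ i : Fin t, ∏ j ∈ Finset.univ.filter (fun j => i < j), (x i - x j) := by
  rw [prod_filter_lt_sub_eq_det_vandermonde_neg]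
  exact mul_Hchain_eq_det_vandermonde_neg t hx.antitone hpar

/-- `H_t(x_1,…,x_t) = Δ(x_1,…,x_t) / (2^{t(t-1)/2} ∏_{k=1}^{t-1} k!)` for a strictly
decreasing integer configuration `x` whose entries all have the same parity. -/
theorem stmt1 (t : ℕ) (ht : 1 ≤ t) (x : Fin t → ℤ) (hx : StrictAnti x)
    (hpar : ∀ i j, (2 : ℤ) ∣ (x i - x j)) :
    (2 ^ (t * (t - 1) / 2) * ∏ k ∈ Finset.range t, (Nat.factorial k : ℤ)) * Hchain t x =
      ∏ i : Fin t, ∏ j ∈ Finset.univ.filter (fun j => i < j), (x i - x j) :=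
  stmt1_general t x hx hpar
end

section
/- For integers t ≥ 1 and variables x_1, ..., x_{t+1}, the following summation identity holds: the sum over all integer tuples (y_1,...,y_t) with x_{i+1} < y_i < x_i for each i of the Vandermonde determinant Δ(y_1,...,y_t) equals (1/(2^t t!)) · Δ(x_1,...,x_{t+1}), whenever all x_i are integers of the same parity. -/
/-!
Write the Vandermonde determinant in the monic basis of step-`h` falling factorials
`P n = X (X - h) ⋯ (X - (n - 1) h)`. Since `P (n + 1) (a + h) - P (n + 1) a = (n + 1) h P n a`,
`h` times the sum of `(n + 1) P n` over the progression `x (i+1), x (i+1) + h, …, x i - h`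
telescopes to `P (n + 1) (x i) - P (n + 1) (x (i+1))`. By multilinearity the sum of the
`t × t` determinants over all `y` is the determinant of these row sums, and up to sign these are
the rows left over from `(P j (x i))` after subtracting consecutive rows, which turns its first
column into `(1, 0, …, 0)`. For integers of equal parity take `h = 2`; the odd offset of the
`y i` is harmless because Vandermonde determinants are invariant under translation.
-/

open Finset Matrix Polynomial
open scoped Nat

section DescPochhammerStep

variable {R : Type*} [CommRing R]

noncomputable def descPochhammerStep (h : R) (n : ℕ) : R[X] :=
  ∏ k ∈ range n, (X - C (k * h))

theorem monic_descPochhammerStep (h : R) (n : ℕ) : (descPochhammerStep h n).Monic :=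
  monic_prod_of_monic _ _ fun _ _ => monic_X_sub_C _

theorem natDegree_descPochhammerStep [Nontrivial R] (h : R) (n : ℕ) :
    (descPochhammerStep h n).natDegree = n := by
  rw [descPochhammerStep, natDegree_prod_of_monic _ _ fun _ _ => monic_X_sub_C _]
  simp only [natDegree_X_sub_C, sum_const, card_range, smul_eq_mul, mul_one]

theorem eval_descPochhammerStep (h a : R) (n : ℕ) :
    (descPochhammerStep h n).eval a = ∏ k ∈ range n, (a - k * h) := by
  simp [descPochhammerStep, eval_prod]

theorem eval_descPochhammerStep_add_sub (h a : R) (n : ℕ) :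
    (descPochhammerStep h (n + 1)).eval (a + h) - (descPochhammerStep h (n + 1)).eval a =
      (n + 1) * h * (descPochhammerStep h n).eval a := by
  simp only [eval_descPochhammerStep]
  rw [prod_range_succ', prod_range_succ]
  have hshift :
      ∏ k ∈ range n, (a + h - ((k + 1 : ℕ) : R) * h) = ∏ k ∈ range n, (a - k * h) :=
    prod_congr rfl fun k _ => by push_cast; ring
  rw [hshift]
  push_cast
  ring

theorem sum_eval_descPochhammerStep (h a : R) (n m : ℕ) :
    ∑ k ∈ range m, (n + 1) * h * (descPochhammerStep h n).eval (a + k * h) =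
      (descPochhammerStep h (n + 1)).eval (a + m * h) -
        (descPochhammerStep h (n + 1)).eval a := by
  calc ∑ k ∈ range m, (n + 1) * h * (descPochhammerStep h n).eval (a + k * h)
      = ∑ k ∈ range m, ((descPochhammerStep h (n + 1)).eval (a + (k + 1 : ℕ) * h) -
          (descPochhammerStep h (n + 1)).eval (a + k * h)) :=
        sum_congr rfl fun k _ => by
          rw [← eval_descPochhammerStep_add_sub, Nat.cast_succ, add_one_mul (k : R), add_assoc]
    _ = _ := by
        rw [sum_range_sub fun k : ℕ => (descPochhammerStep h (n + 1)).eval (a + k * h),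
          Nat.cast_zero, zero_mul, add_zero]

end DescPochhammerStep

namespace Matrix

variable {R : Type*} [CommRing R]

theorem det_of_sum_eq_sum_piFinset {n κ : Type*} [Fintype n] [DecidableEq n]
    (A : n → Finset κ) (g : n → κ → n → R) :
    (of fun i j => ∑ k ∈ A i, g i k j).det =
      ∑ r ∈ Fintype.piFinset A, (of fun i j => g i (r i) j).det := by
  have hrows : (of fun i j => ∑ k ∈ A i, g i k j) = fun i => ∑ k ∈ A i, g i k := by
    ext i j
    simp
  rw [hrows]
  exact (detRowAlternating : (n → R) [⋀^n]→ₗ[R] R).toMultilinearMap.map_sum_finset g A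

theorem det_eq_det_succ_sub_castSucc_of_col_zero_eq_one {n : ℕ}
    (M : Matrix (Fin (n + 1)) (Fin (n + 1)) R) (hM : ∀ i, M i 0 = 1) :
    M.det = (of fun i j : Fin n => M i.succ j.succ - M i.castSucc j.succ).det := by
  set B : Matrix (Fin (n + 1)) (Fin (n + 1)) R :=
    of fun i j => Fin.cases (M 0 j) (fun i => M i.succ j - M i.castSucc j) i
  have hMB : M.det = B.det :=
    det_eq_of_forall_row_eq_smul_add_pred (fun _ => 1) (fun _ => rfl) fun i j => by simp [B]
  rw [hMB, det_succ_column_zero, Fin.sum_univ_succ]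
  simp [B, hM, submatrix]

theorem prod_filter_lt_sub_eq_neg_one_pow_mul_det_vandermonde {n : ℕ} (v : Fin n → R) :
    ∏ i : Fin n, ∏ j ∈ univ.filter (fun j => i < j), (v i - v j) =
      (-1) ^ n.choose 2 * (vandermonde v).det := by
  have hcard : ∑ i : Fin n, #(Ioi i) = n.choose 2 := by
    simp only [Fin.card_Ioi]
    rw [Fin.sum_univ_eq_sum_range (fun i => n - 1 - i), ← sum_range_reflect, Nat.choose_two_right,
      ← sum_range_id]
    exact sum_congr rfl fun i hi => by simp at hi; omega
  rw [det_vandermonde, ← hcard, ← prod_pow_eq_pow_sum, ← prod_mul_distrib]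
  refine prod_congr rfl fun i _ => ?_
  rw [← prod_const, ← prod_mul_distrib]
  exact prod_congr (by ext; simp) fun j _ => by ring

theorem sum_det_vandermonde_interlacing {t : ℕ} (h : R) (x : Fin (t + 1) → R)
    (m : Fin t → ℕ) (hm : ∀ i, x i.castSucc = x i.succ + m i * h) :
    h ^ t * t ! * ∑ k ∈ Fintype.piFinset fun i => range (m i),
        (vandermonde fun i => x i.succ + k i * h).det =
      (-1) ^ t * (vandermonde x).det := by
  nontriviality R
  have hdet (n : ℕ) (v : Fin n → R) :
      (vandermonde v).det = (of fun i j : Fin n => (descPochhammerStep h j).eval (v i)).det :=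
    det_eval_matrixOfPolynomials_eq_det_vandermonde v _
      (fun j => natDegree_descPochhammerStep h j) fun j => monic_descPochhammerStep h j
  have hfact : ∏ j : Fin t, ((j : R) + 1) = t ! := by
    rw [Fin.prod_univ_eq_prod_range (fun j => (j : R) + 1), ← prod_range_add_one_eq_factorial]
    push_cast
    rfl
  have hrow (i j : Fin t) :
      (descPochhammerStep h (j + 1)).eval (x i.succ) -
          (descPochhammerStep h (j + 1)).eval (x i.castSucc) =
        -h * ∑ k ∈ range (m i),
          ((j : R) + 1) * (descPochhammerStep h j).eval (x i.succ + k * h) := by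
    rw [hm, ← neg_sub, ← sum_eval_descPochhammerStep, neg_mul, mul_sum]
    exact congrArg _ (sum_congr rfl fun k _ => by ring)
  calc h ^ t * t ! * ∑ k ∈ Fintype.piFinset fun i => range (m i),
        (vandermonde fun i => x i.succ + k i * h).det
      = (-1) ^ t * ((-h) ^ t * ∑ k ∈ Fintype.piFinset fun i => range (m i),
          (of fun i j : Fin t =>
            ((j : R) + 1) * (descPochhammerStep h j).eval (x i.succ + k i * h)).det) := by
        rw [← mul_assoc, ← mul_pow, neg_one_mul, neg_neg, mul_assoc, mul_sum]
        refine congrArg (h ^ t * ·) (sum_congr rfl fun k _ => ?_)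
        rw [hdet, ← hfact, ← det_mul_row]
        rfl
    _ = (-1) ^ t * (vandermonde x).det := by
        rw [← det_of_sum_eq_sum_piFinset (fun i => range (m i))
            (fun i k j => ((j : R) + 1) * (descPochhammerStep h j).eval (x i.succ + k * h)),
          ← Fin.prod_const t (-h), ← det_mul_column, hdet,
          det_eq_det_succ_sub_castSucc_of_col_zero_eq_one _ fun i => by simp [descPochhammerStep]]
        congr 3
        ext i j
        simp only [of_apply, Fin.val_succ, hrow]

end Matrix

theorem Int.filter_Ioo_not_two_dvd_sub_eq_image {a b : ℤ} {m : ℕ} (hb : b = a + m * 2) :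
    (Ioo a b).filter (fun z => ¬ 2 ∣ z - b) =
      (Finset.range m).image fun k : ℕ => a + k * 2 + 1 := by
  ext z
  simp only [mem_filter, mem_Ioo, mem_image, mem_range]
  constructor
  · rintro ⟨⟨haz, hzb⟩, hodd⟩
    exact ⟨((z - a) / 2).toNat, by omega, by omega⟩
  · rintro ⟨k, hk, rfl⟩
    omega

open Finset in
theorem stmt2_general (t : ℕ) (x : Fin (t + 1) → ℤ) (hx : StrictAnti x)
    (hpar : ∀ i j, (2 : ℤ) ∣ (x i - x j)) :
    (2 ^ t * (Nat.factorial t : ℤ)) *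
      ∑ y ∈ Fintype.piFinset (fun i : Fin t =>
          (Finset.Ioo (x i.succ) (x i.castSucc)).filter
            (fun z => ¬ (2 ∣ (z - x i.castSucc)))),
        ∏ i : Fin t, ∏ j ∈ Finset.univ.filter (fun j => i < j), (y i - y j) =
    ∏ i : Fin (t + 1), ∏ j ∈ Finset.univ.filter (fun j => i < j), (x i - x j) := by
  obtain ⟨m, hm⟩ : ∃ m : Fin t → ℕ, ∀ i, x i.castSucc = x i.succ + m i * 2 := by
    choose c hc using fun i : Fin t => hpar i.castSucc i.succ
    refine ⟨fun i => (c i).toNat, fun i => ?_⟩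
    have := hx (Fin.castSucc_lt_succ (i := i))
    have := hc i
    dsimp only
    omega
  have hS : (fun i : Fin t => (Ioo (x i.succ) (x i.castSucc)).filter (¬ 2 ∣ · - x i.castSucc)) =
      fun i => (range (m i)).image fun k : ℕ => x i.succ + k * 2 + 1 :=
    funext fun i => Int.filter_Ioo_not_two_dvd_sub_eq_image (hm i)
  have hinj : Set.InjOn (fun (k : Fin t → ℕ) i => x i.succ + k i * 2 + 1)
      (Fintype.piFinset fun i => range (m i)) := fun k _ l _ hkl =>
    funext fun i => by simpa using congrFun hkl i
  rw [hS, Fintype.piFinset_image (fun i (k : ℕ) => x i.succ + k * 2 + 1) fun i => range (m i),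
    sum_image hinj]
  simp_rw [prod_filter_lt_sub_eq_neg_one_pow_mul_det_vandermonde, det_vandermonde_add, ← mul_sum]
  rw [mul_left_comm, sum_det_vandermonde_interlacing 2 x m hm, Nat.choose_succ_succ',
    Nat.choose_one_right, pow_add]
  ring

open Finset in
/-- Summing the Vandermonde determinant `Δ(y_1,…,y_t)` over all lattice tuples
`(y_1,…,y_t)` with `x_{i+1} < y_i < x_i` (the `y_i` of parity opposite to the
common parity of the `x_i`) gives `Δ(x_1,…,x_{t+1}) / (2^t t!)`. -/
theorem stmt2 (t : ℕ) (ht : 1 ≤ t) (x : Fin (t + 1) → ℤ) (hx : StrictAnti x)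
    (hpar : ∀ i j, (2 : ℤ) ∣ (x i - x j)) :
    (2 ^ t * (Nat.factorial t : ℤ)) *
      ∑ y ∈ Fintype.piFinset (fun i : Fin t =>
          (Finset.Ioo (x i.succ) (x i.castSucc)).filter
            (fun z => ¬ (2 ∣ (z - x i.castSucc)))),
        ∏ i : Fin t, ∏ j ∈ Finset.univ.filter (fun j => i < j), (y i - y j) =
    ∏ i : Fin (t + 1), ∏ j ∈ Finset.univ.filter (fun j => i < j), (x i - x j) :=
  stmt2_general t x hx hpar
end

section
/- For a nonnegative integer a and n ≥ 0, the shifted Jacobi polynomial satisfies P̃_n^{(0,a)}(x) = (n!/(n+a)!) · (d/dx)^a (x^a P̃_n^{(a,0)}(x)). -/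
/-!
For `y > 0`, `y ^ a * P̃_n^{(a,0)}(y)` is the polynomial `(1/n!) D^n [X^(n+a) (1-X)^n]`, so its
`a`-th derivative is `(1/n!) D^(n+a) [X^(n+a) (1-X)^n]`, and the theorem reduces to the identity
`(n+a)! D^n [X^n (1-X)^(n+a)] = n! (1-X)^a D^(n+a) [X^(n+a) (1-X)^n]`.
Expanding both sides by the Leibniz rule, the terms of index `k > n` on the right vanish, and the
`k`-th terms on both sides are multiples of `X^k (1-X)^(n+a-k)` with coefficients that agree by a
factorial identity.
-/

open Polynomial Finset Nat

/-- The shifted Jacobi polynomial `P̃_n^{(a,b)}(x) = P_n^{(a,b)}(1-2x)`, defined by the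
Rodrigues formula `P̃_n^{(a,b)}(x) = (1/n!) x^{-a} (1-x)^{-b} (d/dx)^n [x^{n+a}(1-x)^{n+b}]`. -/
noncomputable def Ptilde (n : ℕ) (a b : ℝ) (x : ℝ) : ℝ :=
  (1 / (Nat.factorial n : ℝ)) * x ^ (-a) * (1 - x) ^ (-b) *
    iteratedDeriv n (fun t : ℝ => t ^ ((n : ℝ) + a) * (1 - t) ^ ((n : ℝ) + b)) x

theorem Polynomial.iteratedDeriv_eval {𝕜 : Type*} [NontriviallyNormedField 𝕜] (m : ℕ)
    (p : 𝕜[X]) :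
    iteratedDeriv m (fun x => p.eval x) = fun x => (derivative^[m] p).eval x := by
  induction m generalizing p with
  | zero => simp
  | succ m ih =>
    rw [iteratedDeriv_succ', Function.iterate_succ_apply, ← ih]
    congr 1
    funext x
    exact p.deriv

theorem Polynomial.iterate_derivative_one_sub_X_pow {R : Type*} [CommRing R] (q k : ℕ) :
    derivative^[k] ((1 - X : R[X]) ^ q) =
      ((-1) ^ k * q.descFactorial k : R) • (1 - X) ^ (q - k) := by
  have h := iterate_derivative_comp_one_sub_X (X ^ q : R[X]) k
  rw [X_pow_comp, iterate_derivative_X_pow_eq_smul] at h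
  rw [h, smul_comp, X_pow_comp, smul_eq_C_mul, smul_eq_C_mul, C_mul, C_pow, C_neg, C_1]
  ring

theorem Polynomial.iterate_derivative_X_pow_mul_one_sub_X_pow {R : Type*} [CommRing R]
    (m p q : ℕ) :
    derivative^[m] ((X : R[X]) ^ p * (1 - X) ^ q) =
      ∑ k ∈ range (m + 1),
        ((-1) ^ k * (m.choose k * p.descFactorial (m - k) * q.descFactorial k : ℕ) : R) •
          (X ^ (p - (m - k)) * (1 - X) ^ (q - k)) := by
  rw [iterate_derivative_mul]
  refine sum_congr rfl fun k _ => ?_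
  rw [iterate_derivative_X_pow_eq_smul, iterate_derivative_one_sub_X_pow, smul_mul_smul_comm,
    ← Nat.cast_smul_eq_nsmul R, smul_smul]
  congr 1
  push_cast
  ring

theorem Nat.factorial_add_mul_choose_mul_descFactorial_comm (n a k : ℕ) (hk : k ≤ n) :
    (n + a)! * (n.choose k * n.descFactorial (n - k) * (n + a).descFactorial k) =
      n ! * ((n + a).choose k * (n + a).descFactorial (n + a - k) * n.descFactorial k) := by
  have hn := Nat.choose_mul_factorial_mul_factorial hk
  have hna := Nat.choose_mul_factorial_mul_factorial (hk.trans (Nat.le_add_right n a))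
  simp only [Nat.descFactorial_eq_factorial_mul_choose, Nat.choose_symm hk,
    Nat.choose_symm (hk.trans (Nat.le_add_right n a))]
  calc _ = (n + a)! * n.choose k * (n + a).choose k * (n.choose k * k ! * (n - k)!) := by ring
    _ = n ! * (n + a).choose k * n.choose k * ((n + a).choose k * k ! * (n + a - k)!) := by
      rw [hn, hna]; ring
    _ = _ := by ring

theorem Polynomial.factorial_smul_iterate_derivative_X_pow_mul_one_sub_X_pow_add
    {R : Type*} [CommRing R] (n a : ℕ) :
    ((n + a)! : R) • derivative^[n] ((X : R[X]) ^ n * (1 - X) ^ (n + a)) =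
      (n ! : R) • ((1 - X) ^ a * derivative^[n + a] (X ^ (n + a) * (1 - X) ^ n)) := by
  have high_terms_vanish : ∀ i ∈ range a,
      ((-1) ^ (n + 1 + i) * ((n + a).choose (n + 1 + i) *
        (n + a).descFactorial (n + a - (n + 1 + i)) * n.descFactorial (n + 1 + i) : ℕ) : R) •
        ((X : R[X]) ^ (n + a - (n + a - (n + 1 + i))) * (1 - X) ^ (n - (n + 1 + i))) = 0 := by
    intro i _
    rw [Nat.descFactorial_eq_zero_iff_lt.mpr (show n < n + 1 + i by omega)]
    simp
  rw [iterate_derivative_X_pow_mul_one_sub_X_pow, iterate_derivative_X_pow_mul_one_sub_X_pow,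
    show n + a + 1 = n + 1 + a by omega, sum_range_add _ (n + 1) a,
    sum_eq_zero high_terms_vanish, add_zero, smul_sum, mul_sum, smul_sum]
  refine sum_congr rfl fun k hk => ?_
  have hkn : k ≤ n := Nat.lt_succ_iff.mp (mem_range.mp hk)
  rw [mul_smul_comm, smul_smul, smul_smul, Nat.sub_sub_self hkn, Nat.sub_sub_self (by omega),
    mul_comm ((1 - X) ^ a), mul_assoc (X ^ k), ← pow_add, show n - k + a = n + a - k by omega]
  congr 1
  have coeff_eq := congrArg (Nat.cast (R := R))
    (Nat.factorial_add_mul_choose_mul_descFactorial_comm n a k hkn)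
  push_cast at coeff_eq ⊢
  linear_combination (-1) ^ k * coeff_eq

theorem Ptilde_natCast (n p q : ℕ) (x : ℝ) :
    Ptilde n p q x = (n ! : ℝ)⁻¹ * (x ^ p)⁻¹ * ((1 - x) ^ q)⁻¹ *
      (derivative^[n] (X ^ (n + p) * (1 - X) ^ (n + q))).eval x := by
  have rodrigues_weight : (fun t : ℝ => t ^ ((n : ℝ) + p) * (1 - t) ^ ((n : ℝ) + q)) =
      fun t => (X ^ (n + p) * (1 - X) ^ (n + q) : ℝ[X]).eval t := by
    funext t
    simp only [eval_mul, eval_pow, eval_sub, eval_one, eval_X, ← Nat.cast_add, Real.rpow_natCast]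
  rw [Ptilde, rodrigues_weight, Polynomial.iteratedDeriv_eval, Real.rpow_neg_natCast,
    Real.rpow_neg_natCast, zpow_neg, zpow_neg, zpow_natCast, zpow_natCast, one_div]

/-- For a nonnegative integer `a`:
`P̃_n^{(0,a)}(x) = (n!/(n+a)!) (d/dx)^a (x^a P̃_n^{(a,0)}(x))`. -/
theorem stmt7 (a n : ℕ) (x : ℝ) (hx : x ∈ Set.Ioo (0 : ℝ) 1) :
    Ptilde n 0 a x =
      ((Nat.factorial n : ℝ) / (Nat.factorial (n + a))) *
        iteratedDeriv a (fun y : ℝ => y ^ a * Ptilde n a 0 y) x := by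
  obtain ⟨hx0, hx1⟩ := hx
  have lhs_eq := Ptilde_natCast n 0 a x
  rw [Nat.cast_zero, pow_zero, inv_one, mul_one, add_zero] at lhs_eq
  have weighted : (fun y : ℝ => y ^ a * Ptilde n a 0 y) =ᶠ[nhds x]
      fun y => (C (n ! : ℝ)⁻¹ * derivative^[n] (X ^ (n + a) * (1 - X) ^ n)).eval y := by
    filter_upwards [Ioi_mem_nhds hx0] with y (hy : 0 < y)
    have weighted_eq := Ptilde_natCast n a 0 y
    rw [Nat.cast_zero, pow_zero, inv_one, mul_one, add_zero] at weighted_eq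
    rw [weighted_eq, eval_mul, eval_C]
    field_simp [pow_ne_zero a hy.ne']
  have identity := congrArg (eval x)
    (factorial_smul_iterate_derivative_X_pow_mul_one_sub_X_pow_add (R := ℝ) n a)
  simp only [eval_smul, eval_mul, eval_pow, eval_sub, eval_one, eval_X, smul_eq_mul]
    at identity
  rw [lhs_eq, weighted.iteratedDeriv_eq, Polynomial.iteratedDeriv_eval,
    iterate_derivative_C_mul, ← Function.iterate_add_apply, add_comm a n]
  simp only [eval_mul, eval_C]
  field_simp [pow_ne_zero a (sub_ne_zero.mpr hx1.ne')]
  linear_combination identity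
end

section
/- Let p ≤ s < t ≤ q be integers, x ∈ (0,1), and l an integer with p−l ≥ 0. Then ∫_0^x [(x−u)^{t−s−1}/(t−s−1)!] u^{s−p} P̃_{p−l}^{(s−p, q−s)}(u) du = [(p−l+s−p)!/(p−l+t−p)!] · x^{t−p} · P̃_{p−l}^{(t−p, q−t)}(x); equivalently, for nonnegative integers n, α and positive integer d: ∫_0^x [(x−u)^{d−1}/(d−1)!] u^{α} P̃_n^{(α, β)}(u) du = [(n+α)!/(n+α+d)!] x^{α+d} P̃_n^{(α+d, β−d)}(x). -/
/-!
Put `w m c t = t ^ m * (1 - t) ^ c`, so that by the Rodrigues formula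
`(n+α)!/(n+α+k)! · t^(α+k) P̃_n^{(α+k,β-k)}(t) = f_k(t)` with
`f_k(t) = (n+α)!/((n+α+k)! n!) · (1-t)^(k-β) · Dⁿ w_{n+α+k, n+β-k}(t)`.
Applying `Dⁿ` to `(1-t) w_{m,c}' = m w_{m-1,c+1} - c w_{m,c}` gives the recurrence
`(1-t) Dⁿ⁺¹ w_{m,c} + (c-n) Dⁿ w_{m,c} = m Dⁿ w_{m-1,c+1}`, which says exactly that
`f_{k+1}' = f_k`. Moreover `f_{k+1}(0) = 0` since `w_{m,c}` vanishes to order `m > n` at `0`.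
So `f_d` is the `d`-fold primitive of `f_0` vanishing at `0`, and Cauchy's formula for
repeated integration expresses it as the integral on the left.
-/

open Set Filter Topology
open scoped ContDiff

section IteratedDeriv

variable {𝕜 : Type*} [NontriviallyNormedField 𝕜]

theorem ContDiffOn.hasDerivAt_iteratedDeriv {F : Type*} [NormedAddCommGroup F] [NormedSpace 𝕜 F]
    {f : 𝕜 → F} {s : Set 𝕜} (hf : ContDiffOn 𝕜 ∞ f s) (hs : IsOpen s) (k : ℕ) {t : 𝕜}
    (ht : t ∈ s) : HasDerivAt (iteratedDeriv k f) (iteratedDeriv (k + 1) f t) t := by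
  have hdiff : DifferentiableOn 𝕜 (iteratedDeriv k f) s :=
    (hf.differentiableOn_iteratedDerivWithin (by exact_mod_cast WithTop.coe_lt_top _)
      hs.uniqueDiffOn).congr (iteratedDerivWithin_of_isOpen hs).symm
  rw [iteratedDeriv_succ]
  exact ((hdiff t ht).differentiableAt (hs.mem_nhds ht)).hasDerivAt

theorem iteratedDeriv_succ_one_sub_mul {f : 𝕜 → 𝕜} {n : ℕ} {t : 𝕜}
    (hf : ContDiffAt 𝕜 (n + 1) f t) :
    iteratedDeriv (n + 1) (fun s => (1 - s) * f s) t
      = (1 - t) * iteratedDeriv (n + 1) f t - (n + 1) * iteratedDeriv n f t := by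
  have hline : ∀ i, iteratedDeriv (i + 2) (fun s : 𝕜 => 1 - s) t = 0 := fun i => by
    rw [iteratedDeriv_const_sub (by omega), iteratedDeriv_neg, iteratedDeriv_fun_id]
    simp
  rw [iteratedDeriv_fun_mul (by fun_prop) hf, Finset.sum_range_succ', Finset.sum_range_succ',
    Finset.sum_eq_zero (fun i _ => by rw [hline, mul_zero, zero_mul])]
  simp only [zero_add, Nat.choose_one_right, Nat.cast_add, Nat.cast_one, iteratedDeriv_one,
    deriv_const_sub_id', add_tsub_cancel_right, Nat.choose_zero_right, iteratedDeriv_zero,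
    tsub_zero]
  ring

end IteratedDeriv

noncomputable def jacobiWeight (m : ℕ) (c : ℝ) (t : ℝ) : ℝ := t ^ m * (1 - t) ^ c

section JacobiWeight

variable {m : ℕ} {c t : ℝ}

theorem contDiffAt_one_sub_rpow_const (ht : t < 1) :
    ContDiffAt ℝ ∞ (fun s : ℝ => (1 - s) ^ c) t :=
  (Real.contDiffAt_rpow_const_of_ne (sub_pos.2 ht).ne').comp t (contDiffAt_const.sub contDiffAt_id)

theorem hasDerivAt_one_sub_rpow_const (ht : t < 1) :
    HasDerivAt (fun s : ℝ => (1 - s) ^ c) (-(c * (1 - t) ^ (c - 1))) t := by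
  simpa [Function.comp_def] using
    (Real.hasDerivAt_rpow_const (x := 1 - t) (p := c) (Or.inl (sub_pos.2 ht).ne')).comp t
      ((hasDerivAt_id t).const_sub 1)

theorem contDiffOn_jacobiWeight : ContDiffOn ℝ ∞ (jacobiWeight m c) (Iio 1) := fun _ ht =>
  ((contDiff_id.pow m).contDiffAt.mul (contDiffAt_one_sub_rpow_const ht)).contDiffWithinAt

theorem hasDerivAt_jacobiWeight (ht : t < 1) :
    HasDerivAt (jacobiWeight m c)
      (m * jacobiWeight (m - 1) c t - c * jacobiWeight m (c - 1) t) t :=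
  ((hasDerivAt_pow m t).mul (hasDerivAt_one_sub_rpow_const ht)).congr_deriv
    (by simp only [jacobiWeight]; ring)

theorem jacobiWeight_add_one_eqOn :
    EqOn (jacobiWeight m (c + 1)) (fun s => (1 - s) * jacobiWeight m c s) (Iio 1) := by
  intro s hs
  simp only [jacobiWeight, Real.rpow_add_one (sub_pos.2 hs).ne']
  ring

/-- Both sides are `Dⁿ⁺¹ w_{m,c+1}(t)`: once by the Leibniz rule applied to
`w_{m,c+1} = (1 - s) w_{m,c}`, once by differentiating `w_{m,c+1}` first. -/
theorem one_sub_mul_iteratedDeriv_succ_jacobiWeight (n : ℕ) (ht : t < 1) :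
    (1 - t) * iteratedDeriv (n + 1) (jacobiWeight m c) t
        + (c - n) * iteratedDeriv n (jacobiWeight m c) t
      = m * iteratedDeriv n (jacobiWeight (m - 1) (c + 1)) t := by
  have hIio : Iio (1 : ℝ) ∈ 𝓝 t := Iio_mem_nhds ht
  have hsmooth : ∀ {m c}, ContDiffAt ℝ ∞ (jacobiWeight m c) t :=
    contDiffOn_jacobiWeight.contDiffAt hIio
  have hderiv : deriv (jacobiWeight m (c + 1)) =ᶠ[𝓝 t]
      fun s => m * jacobiWeight (m - 1) (c + 1) s - (c + 1) * jacobiWeight m c s := by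
    filter_upwards [hIio] with s hs
    simpa using (hasDerivAt_jacobiWeight (c := c + 1) hs).deriv
  have hleibniz : iteratedDeriv (n + 1) (jacobiWeight m (c + 1)) t
      = (1 - t) * iteratedDeriv (n + 1) (jacobiWeight m c) t
        - (n + 1) * iteratedDeriv n (jacobiWeight m c) t := by
    rw [(eventuallyEq_of_mem hIio jacobiWeight_add_one_eqOn).iteratedDeriv_eq,
      iteratedDeriv_succ_one_sub_mul (hsmooth.of_le (by exact_mod_cast le_top))]
  have hdifferentiate : iteratedDeriv (n + 1) (jacobiWeight m (c + 1)) t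
      = m * iteratedDeriv n (jacobiWeight (m - 1) (c + 1)) t
        - (c + 1) * iteratedDeriv n (jacobiWeight m c) t := by
    rw [iteratedDeriv_succ', hderiv.iteratedDeriv_eq, iteratedDeriv_fun_sub,
      iteratedDeriv_const_mul_field, iteratedDeriv_const_mul_field]
    all_goals exact (contDiffAt_const.mul hsmooth).of_le (by exact_mod_cast le_top)
  linear_combination hdifferentiate - hleibniz

theorem iteratedDeriv_jacobiWeight_zero {n : ℕ} (hn : n < m) :
    iteratedDeriv n (jacobiWeight m c) 0 = 0 := by
  rw [show jacobiWeight m c = fun s => s ^ m * (1 - s) ^ c from rfl,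
    iteratedDeriv_fun_mul (by fun_prop)
      ((contDiffAt_one_sub_rpow_const zero_lt_one).of_le (by exact_mod_cast le_top))]
  refine Finset.sum_eq_zero fun i hi => ?_
  rw [iteratedDeriv_fun_pow_zero, if_neg (by grind)]
  simp

end JacobiWeight

theorem integral_pow_div_factorial_mul_eq_of_hasDerivAt {f : ℕ → ℝ → ℝ} {a x : ℝ}
    (hf : ∀ k, ∀ u ∈ uIcc a x, HasDerivAt (f (k + 1)) (f k u) u)
    (hf₀ : ContinuousOn (f 0) (uIcc a x)) (ha : ∀ k, f (k + 1) a = 0) (j k : ℕ) :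
    ∫ u in a..x, (x - u) ^ j / j.factorial * f k u = f (k + j + 1) x := by
  have hcont : ∀ k, ContinuousOn (f k) (uIcc a x)
    | 0 => hf₀
    | k + 1 => HasDerivAt.continuousOn (hf k)
  induction j generalizing k with
  | zero =>
    simp only [pow_zero, Nat.factorial_zero, Nat.cast_one, div_one, one_mul, add_zero]
    rw [intervalIntegral.integral_eq_sub_of_hasDerivAt (hf k) (hcont k).intervalIntegrable, ha,
      sub_zero]
  | succ j ih =>
    have hpoly : ∀ u ∈ uIcc a x, HasDerivAt (fun v => (x - v) ^ (j + 1) / (j + 1).factorial)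
        (-((x - u) ^ j / j.factorial)) u := fun u _ => by
      refine ((((hasDerivAt_id' u).const_sub x).pow (j + 1)).div_const _).congr_deriv ?_
      rw [Nat.factorial_succ]
      push_cast
      field_simp
    rw [intervalIntegral.integral_mul_deriv_eq_deriv_mul hpoly (hf k)
      (by apply Continuous.intervalIntegrable; fun_prop) (hcont k).intervalIntegrable]
    simp only [sub_self, ha, zero_pow (Nat.succ_ne_zero j), zero_div, zero_mul, mul_zero,
      neg_mul, intervalIntegral.integral_neg, zero_sub, neg_neg, ih]
    ring_nf

/-- The function `f_k` of the header: for `t > 0` it is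
`(n+α)!/(n+α+k)! · t^(α+k) P̃_n^{(α+k,β-k)}(t)`, but without the factor `t ^ (-(α+k))` hidden in
`Ptilde`, so it is smooth on `(-∞, 1)`. -/
noncomputable def jacobiPrimitive (n α : ℕ) (β : ℝ) (k : ℕ) (t : ℝ) : ℝ :=
  (n + α).factorial / ((n + α + k).factorial * n.factorial) * (1 - t) ^ ((k : ℝ) - β) *
    iteratedDeriv n (jacobiWeight (n + α + k) (n + β - k)) t

section JacobiPrimitive

variable {n α : ℕ} {β t : ℝ}

theorem jacobiPrimitive_apply_zero {k : ℕ} (hk : k ≠ 0) : jacobiPrimitive n α β k 0 = 0 := by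
  rw [jacobiPrimitive, iteratedDeriv_jacobiWeight_zero (by omega), mul_zero]

theorem continuousAt_jacobiPrimitive (k : ℕ) (ht : t < 1) :
    ContinuousAt (jacobiPrimitive n α β k) t :=
  (continuousAt_const.mul (hasDerivAt_one_sub_rpow_const ht).continuousAt).mul
    (contDiffOn_jacobiWeight.hasDerivAt_iteratedDeriv isOpen_Iio n ht).continuousAt

theorem hasDerivAt_jacobiPrimitive (k : ℕ) (ht : t < 1) :
    HasDerivAt (jacobiPrimitive n α β (k + 1)) (jacobiPrimitive n α β k t) t := by
  set C : ℝ := (n + α).factorial / ((n + α + (k + 1)).factorial * n.factorial) with hCdef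
  set P : ℝ := (1 - t) ^ ((k : ℝ) - β)
  have hrec := one_sub_mul_iteratedDeriv_succ_jacobiWeight (m := n + α + (k + 1))
    (c := n + β - (k + 1 : ℕ)) n ht
  rw [show n + α + (k + 1) - 1 = n + α + k by omega, Nat.cast_succ,
    show (n : ℝ) + β - (k + 1) + 1 = n + β - k by ring] at hrec
  have hC : C * (n + α + (k + 1) : ℕ)
      = (n + α).factorial / ((n + α + k).factorial * n.factorial) := by
    rw [hCdef, ← add_assoc, Nat.factorial_succ]
    push_cast
    field_simp
  have hpow : (1 - t) ^ ((k + 1 : ℕ) - β) = P * (1 - t) := by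
    rw [← Real.rpow_add_one (sub_pos.2 ht).ne']
    push_cast
    ring_nf
  refine (((hasDerivAt_one_sub_rpow_const ht).const_mul C).mul
    (contDiffOn_jacobiWeight.hasDerivAt_iteratedDeriv isOpen_Iio n ht)).congr_deriv ?_
  rw [hpow, show ((k + 1 : ℕ) : ℝ) - β - 1 = k - β by push_cast; ring, jacobiPrimitive]
  push_cast at hrec hC ⊢
  linear_combination (C * P) * hrec
    + (P * iteratedDeriv n (jacobiWeight (n + α + k) (n + β - k)) t) * hC

theorem jacobiPrimitive_eq_pow_mul_Ptilde (k : ℕ) (ht : 0 < t) :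
    jacobiPrimitive n α β k t
      = (n + α).factorial / (n + α + k).factorial * t ^ (α + k) * Ptilde n (α + k) (β - k) t := by
  have hweight : (fun s : ℝ => s ^ ((n : ℝ) + (α + k)) * (1 - s) ^ ((n : ℝ) + (β - k)))
      = jacobiWeight (n + α + k) (n + β - k) := by
    funext s
    rw [jacobiWeight, ← Real.rpow_natCast]
    push_cast
    ring_nf
  rw [Ptilde, hweight, jacobiPrimitive, neg_sub, Real.rpow_neg ht.le,
    show (α : ℝ) + k = (α + k : ℕ) by push_cast; ring, Real.rpow_natCast]
  field_simp

end JacobiPrimitive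

/-- For nonnegative integers `n, α`, a positive integer `d` and real `β`:
`∫_0^x ((x-u)^{d-1}/(d-1)!) u^α P̃_n^{(α,β)}(u) du
  = ((n+α)!/(n+α+d)!) x^{α+d} P̃_n^{(α+d, β-d)}(x)`. -/
theorem stmt13 (n α d : ℕ) (hd : 1 ≤ d) (β : ℝ) (x : ℝ) (hx : x ∈ Set.Ioo (0 : ℝ) 1) :
    ∫ u in (0 : ℝ)..x, ((x - u) ^ (d - 1) / (Nat.factorial (d - 1) : ℝ)) * u ^ α *
        Ptilde n α β u =
      ((Nat.factorial (n + α) : ℝ) / (Nat.factorial (n + α + d))) * x ^ (α + d) *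
        Ptilde n (α + d) (β - d) x := by
  obtain ⟨hx₀, hx₁⟩ := hx
  have hlt : ∀ u ∈ uIcc 0 x, u < 1 := fun u hu => by
    rw [uIcc_of_le hx₀.le] at hu
    exact hu.2.trans_lt hx₁
  have hprimitive : ∀ u, 0 < u → u ^ α * Ptilde n α β u = jacobiPrimitive n α β 0 u :=
    fun u hu => by simp [jacobiPrimitive_eq_pow_mul_Ptilde 0 hu, Nat.factorial_ne_zero]
  calc _ = ∫ u in (0 : ℝ)..x,
          (x - u) ^ (d - 1) / (d - 1).factorial * jacobiPrimitive n α β 0 u := by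
        refine intervalIntegral.integral_congr_ae (.of_forall fun u hu => ?_)
        rw [uIoc_of_le hx₀.le] at hu
        rw [mul_assoc, hprimitive u hu.1]
    _ = jacobiPrimitive n α β d x := by
        rw [integral_pow_div_factorial_mul_eq_of_hasDerivAt
          (fun k u hu => hasDerivAt_jacobiPrimitive k (hlt u hu))
          (fun u hu => (continuousAt_jacobiPrimitive 0 (hlt u hu)).continuousWithinAt)
          (fun k => jacobiPrimitive_apply_zero k.succ_ne_zero), zero_add, Nat.sub_add_cancel hd]
    _ = _ := jacobiPrimitive_eq_pow_mul_Ptilde d hx₀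
end

section
/- For a normalized Hermitian corank-1 projection construction: let a_1 > a_2 > ... > a_n be reals, s_1, ..., s_n positive integers, and (q_1,...,q_n) have the Dirichlet distribution D[s_1,...,s_n]. Then the n−1 zeros λ_1 > ... > λ_{n−1} of the random rational function Σ_{i=1}^n q_i/(x − a_i) interlace with the a_i (a_1 > λ_1 > a_2 > ... > λ_{n−1} > a_n) and their joint density is [Γ(s_1+...+s_n)/(Γ(s_1)···Γ(s_n))] · [∏_{1≤j<k≤n−1}(λ_j − λ_k)] / [∏_{1≤j<k≤n}(a_j − a_k)^{s_j+s_k−1}] · ∏_{j=1}^{n−1}∏_{p=1}^{n}|λ_j − a_p|^{s_p−1} on the interlacing region. -/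
open MeasureTheory

/-!
If `Σ qᵢ = 1` and `λ₁, …, λₘ` are the zeros of `Σ qᵢ/(x - aᵢ)`, then by partial fractions
(Lagrange interpolation of `∏ⱼ (X - λⱼ)` at the nodes `aᵢ`)
`Σ qᵢ/(x - aᵢ) = ∏ⱼ (x - λⱼ) / ∏ᵢ (x - aᵢ)`, so `qᵢ = wᵢ ∏ⱼ (aᵢ - λⱼ)` with the nodal weights
`wᵢ = ∏_{k ≠ i} (aᵢ - aₖ)⁻¹`. For positive weights the rational function is positive right of
`a₁`, negative left of `aₘ₊₁` and strictly decreasing on each gap `(aᵢ₊₁, aᵢ)`; hence the zeros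
interlace with the `aᵢ`, and `λ ↦ (q₁, …, qₘ)` inverts the zero map on the interlacing region.
Its Jacobian matrix is `-wⱼ ∏_{k' ≠ k} (aⱼ - λ_{k'})`. The punctured products are a Vandermonde
matrix in `(a₁, …, aₘ)` times the coefficient matrix of the polynomials `∏_{k' ≠ k} (X - λ_{k'})`,
and the same product with `λ` in place of `a` is diagonal; comparing the two gives
`|det| = |w₁ ⋯ wₘ| · |Δ(a₁, …, aₘ)| · |Δ(λ)|`. The change of variables formula then carries the
Dirichlet density to the stated one, the powers of the `wᵢ` producing the `a`-denominator.
-/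

open Finset Matrix Polynomial

section Products

variable {M : Type*} [CommMonoid M] {n : ℕ}

lemma prod_prod_erase_eq_prod_prod_Ioi (F : Fin n → Fin n → M) :
    ∏ i, ∏ k ∈ univ.erase i, F i k = ∏ i, ∏ k ∈ Ioi i, F i k * F k i := by
  have hsplit : ∀ i : Fin n, ∏ k ∈ univ.erase i, F i k =
      (∏ k ∈ Ioi i, F i k) * ∏ k ∈ Iio i, F i k := fun i => by
    rw [← prod_union (disjoint_left.2 fun k h1 h2 => (mem_Ioi.1 h1).not_gt (mem_Iio.1 h2))]
    congr 1; ext k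
    simp only [mem_union, mem_Ioi, mem_Iio, mem_erase, mem_univ, and_true]
    exact ne_comm.trans lt_or_lt_iff_ne.symm
  simp_rw [hsplit, prod_mul_distrib]
  congr 1
  exact prod_comm' fun i k => by simp

lemma prod_erase_eq_prod_succAbove (f : Fin (n + 1) → M) (i : Fin (n + 1)) :
    ∏ k ∈ univ.erase i, f k = ∏ j, f (i.succAbove j) := by
  rw [Fin.univ_succAbove n i, erase_cons, prod_map, Fin.coe_succAboveEmb]

end Products

namespace Matrix

variable {n : ℕ}

section CommRing

variable {R : Type*} [CommRing R] [Nontrivial R]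

lemma punctured_prod_matrix_eq_vandermonde_mul (v l : Fin n → R) :
    (of fun j k => ∏ k' ∈ univ.erase k, (v j - l k')) =
      vandermonde v * of fun (t k : Fin n) => (Lagrange.nodal (univ.erase k) l).coeff t := by
  ext j k
  have hdeg : (Lagrange.nodal (univ.erase k) l).natDegree < n := by
    rw [Lagrange.natDegree_nodal, card_erase_of_mem (mem_univ k), card_univ, Fintype.card_fin]
    exact Nat.sub_lt (Fin.pos k) one_pos
  rw [of_apply, ← Lagrange.eval_nodal, eval_eq_sum_range' hdeg, ← Fin.sum_univ_eq_sum_range,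
    mul_apply]
  exact sum_congr rfl fun t _ => mul_comm _ _

lemma det_punctured_prod_matrix_mul_det_vandermonde (v l : Fin n → R) :
    (of fun j k => ∏ k' ∈ univ.erase k, (v j - l k')).det * (vandermonde l).det =
      (vandermonde v).det * ∏ j, ∏ k ∈ univ.erase j, (l j - l k) := by
  have hdiag : (of fun j k => ∏ k' ∈ univ.erase k, (l j - l k')) =
      diagonal fun j => ∏ k ∈ univ.erase j, (l j - l k) := by
    ext j k
    rcases eq_or_ne j k with rfl | hjk
    · simp
    · rw [of_apply, diagonal_apply_ne _ hjk]
      exact prod_eq_zero (mem_erase.2 ⟨hjk, mem_univ j⟩) (sub_self _)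
  rw [punctured_prod_matrix_eq_vandermonde_mul v l, ← det_diagonal, ← hdiag,
    punctured_prod_matrix_eq_vandermonde_mul l l, det_mul, det_mul]
  ring

end CommRing

section OrderedRing

variable {R : Type*} [CommRing R] [LinearOrder R] [IsStrictOrderedRing R]

lemma abs_det_vandermonde (x : Fin n → R) :
    |(vandermonde x).det| = ∏ i, ∏ k ∈ Ioi i, |x i - x k| := by
  simp_rw [det_vandermonde, abs_prod, abs_sub_comm]

lemma abs_det_vandermonde_of_strictAnti {x : Fin n → R} (hx : StrictAnti x) :
    |(vandermonde x).det| = ∏ i, ∏ k ∈ Ioi i, (x i - x k) := by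
  rw [abs_det_vandermonde]
  exact prod_congr rfl fun i _ => prod_congr rfl fun k hk =>
    abs_of_pos (sub_pos.2 (hx (mem_Ioi.1 hk)))

lemma abs_det_vandermonde_castSucc (x : Fin (n + 1) → R) :
    |(vandermonde x).det| =
      |(vandermonde fun i => x i.castSucc).det| * ∏ i : Fin n, |x i.castSucc - x (Fin.last n)| := by
  simp [abs_det_vandermonde, ← filter_lt_eq_Ioi, prod_filter, Fin.prod_univ_castSucc,
    Fin.castSucc_lt_last, prod_mul_distrib, not_lt.2 (Fin.le_last _)]

lemma abs_prod_prod_erase_sub (x : Fin n → R) :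
    |∏ i, ∏ k ∈ univ.erase i, (x i - x k)| = |(vandermonde x).det| ^ 2 := by
  simp_rw [abs_prod]
  rw [prod_prod_erase_eq_prod_prod_Ioi, abs_det_vandermonde, sq, ← prod_mul_distrib]
  refine prod_congr rfl fun i _ => ?_
  rw [← prod_mul_distrib]
  exact prod_congr rfl fun k _ => by rw [abs_sub_comm (x k)]

lemma abs_det_punctured_prod_jacobian (c v : Fin n → R) {l : Fin n → R}
    (hl : Function.Injective l) :
    |(of fun j k => -(c j * ∏ k' ∈ univ.erase k, (v j - l k'))).det| =
      (∏ j, |c j|) * |(vandermonde v).det| * |(vandermonde l).det| := by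
  have hV : |(vandermonde l).det| ≠ 0 := abs_ne_zero.2 (det_vandermonde_ne_zero_iff.2 hl)
  have h := congrArg abs (det_punctured_prod_matrix_mul_det_vandermonde v l)
  rw [abs_mul, abs_mul, abs_prod_prod_erase_sub] at h
  have hscale : (of fun j k => -(c j * ∏ k' ∈ univ.erase k, (v j - l k'))).det =
      (∏ j, -c j) * (of fun j k => ∏ k' ∈ univ.erase k, (v j - l k')).det := by
    rw [← det_mul_column]
    congr 1; ext j k; simp
  rw [hscale, abs_mul, abs_prod]
  simp_rw [abs_neg]
  refine mul_right_cancel₀ hV ?_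
  rw [mul_assoc, h]
  ring

end OrderedRing

end Matrix

lemma hasFDerivAt_mul_prod_sub {𝕜 : Type*} [NontriviallyNormedField 𝕜] [CompleteSpace 𝕜]
    {n : ℕ} (c v l : Fin n → 𝕜) :
    HasFDerivAt (fun l : Fin n → 𝕜 => fun j => c j * ∏ k, (v j - l k))
      (LinearMap.toContinuousLinearMap (toLin' (of fun j k =>
        -(c j * ∏ k' ∈ univ.erase k, (v j - l k'))))) l := by
  refine hasFDerivAt_pi'.2 fun j => ?_
  have h := (HasFDerivAt.finsetProd (u := univ) fun k _ =>
    ((ContinuousLinearMap.proj k : (Fin n → 𝕜) →L[𝕜] 𝕜).hasFDerivAt (x := l)).const_sub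
      (v j)).const_mul (c j)
  refine h.congr_fderiv ?_
  ext w
  simp [mulVec, dotProduct, mul_sum, mul_assoc]

lemma prod_abs_nodalWeight_pow {K : Type*} [Field K] [LinearOrder K] [IsStrictOrderedRing K]
    {n : ℕ} (a : Fin n → K) (t : Fin n → ℕ) :
    ∏ i, |Lagrange.nodalWeight univ a i| ^ t i =
      (∏ i, ∏ k ∈ Ioi i, |a i - a k| ^ (t i + t k))⁻¹ := by
  simp_rw [Lagrange.nodalWeight, abs_prod, ← prod_pow]
  rw [prod_prod_erase_eq_prod_prod_Ioi, ← prod_inv_distrib]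
  refine prod_congr rfl fun i _ => ?_
  rw [← prod_inv_distrib]
  refine prod_congr rfl fun k _ => ?_
  rw [abs_inv, abs_inv, abs_sub_comm (a k), inv_pow, inv_pow, pow_add, mul_inv]

namespace MeasureTheory

lemma setLIntegral_inter_eq_of_forall_notMem {α : Type*} [MeasurableSpace α] {μ : Measure α}
    {s t : Set α} (hs : MeasurableSet s) {f : α → ENNReal} (hf : ∀ x ∉ t, f x = 0) :
    ∫⁻ x in s ∩ t, f x ∂μ = ∫⁻ x in s, f x ∂μ := by
  rw [Set.inter_comm, ← Measure.restrict_restrict' hs]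
  exact setLIntegral_eq_of_support_subset fun x hx => by_contra fun h => hx (hf x h)

theorem map_withDensity_eq_withDensity_of_invOn {E : Type*} [NormedAddCommGroup E]
    [NormedSpace ℝ E] [FiniteDimensional ℝ E] [MeasurableSpace E] [BorelSpace E]
    {μ : Measure E} [μ.IsAddHaarMeasure] {Λ Ψ : E → E} {Ψ' : E → E →L[ℝ] E} {U V : Set E}
    {f g : E → ENNReal} (hΛ : Measurable Λ) (hV : MeasurableSet V)
    (hΨ' : ∀ x ∈ V, HasFDerivWithinAt Ψ (Ψ' x) V x) (hΛV : Set.MapsTo Λ U V)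
    (hΨU : Set.MapsTo Ψ V U) (hinv : Set.InvOn Ψ Λ U V) (hf : ∀ p ∉ U, f p = 0)
    (hg : ∀ l ∉ V, g l = 0) (hfg : ∀ l ∈ V, g l = ENNReal.ofReal |(Ψ' l).det| * f (Ψ l)) :
    (μ.withDensity f).map Λ = μ.withDensity g := by
  ext A hA
  have himage : Ψ '' (A ∩ V) = Λ ⁻¹' A ∩ U := by
    rw [hinv.2.image_inter', (hinv.symm.bijOn hΨU hΛV).image_eq]
  rw [Measure.map_apply hΛ hA, withDensity_apply _ (hΛ hA), withDensity_apply _ hA,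
    ← setLIntegral_inter_eq_of_forall_notMem (hΛ hA) hf, ← himage,
    lintegral_image_eq_lintegral_abs_det_fderiv_mul μ (hA.inter hV)
      (fun x hx => (hΨ' x hx.2).mono Set.inter_subset_right)
      (hinv.2.injOn.mono Set.inter_subset_right),
    ← setLIntegral_inter_eq_of_forall_notMem hA hg]
  exact setLIntegral_congr_fun (hA.inter hV) fun l hl => (hfg l hl.2).symm

end MeasureTheory

namespace RationalZeros

variable {m : ℕ}

section Field

variable {K : Type*} [Field K]

lemma eq_nodal_of_coeff_eq_one {R : K[X]} (hdeg : R.degree < ↑(m + 1)) (hcoeff : R.coeff m = 1)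
    {l : Fin m → K} (hl : Function.Injective l) (hroot : ∀ j, R.eval (l j) = 0) :
    R = Lagrange.nodal univ l := by
  have hnodal : (Lagrange.nodal univ l).natDegree = m := by simp [Lagrange.natDegree_nodal]
  refine Polynomial.eq_of_degree_sub_lt_of_eval_index_eq (s := univ) hl.injOn ?_
    fun j _ => by rw [hroot, Lagrange.eval_nodal_at_node (mem_univ j)]
  rw [card_univ, Fintype.card_fin, degree_lt_iff_coeff_zero]
  intro k hk
  rw [coeff_sub]
  rcases hk.eq_or_lt with rfl | hk
  · have hlead := (Lagrange.nodal_monic (s := univ) (v := l)).coeff_natDegree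
    rw [hcoeff, ← hlead, hnodal, sub_self]
  · rw [coeff_eq_zero_of_degree_lt (hdeg.trans_le (by exact_mod_cast hk)),
      coeff_eq_zero_of_natDegree_lt (hnodal.trans_lt hk), sub_zero]

/-- The weights `q` for which `Σ qᵢ/(x - aᵢ)` has zeros `l` and `Σ qᵢ = 1`. -/
def weightsOfZeros (a : Fin (m + 1) → K) (l : Fin m → K) (i : Fin (m + 1)) : K :=
  Lagrange.nodalWeight univ a i * ∏ j, (a i - l j)

variable {a : Fin (m + 1) → K}

lemma sum_weightsOfZeros (ha : Function.Injective a) (l : Fin m → K) :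
    ∑ i, weightsOfZeros a l i = 1 := by
  have h := Lagrange.leadingCoeff_eq_sum (s := univ) ha.injOn (P := Lagrange.nodal univ l)
    (by simp [Lagrange.degree_nodal])
  rw [Lagrange.nodal_monic.leadingCoeff] at h
  rw [h]
  refine sum_congr rfl fun i _ => ?_
  rw [weightsOfZeros, Lagrange.nodalWeight, prod_inv_distrib, div_eq_inv_mul, Lagrange.eval_nodal]

lemma sum_weightsOfZeros_div_sub (ha : Function.Injective a) (l : Fin m → K) {x : K}
    (hx : ∀ i, x ≠ a i) :
    ∑ i, weightsOfZeros a l i / (x - a i) = (∏ j, (x - l j)) / ∏ i, (x - a i) := by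
  have h := Lagrange.eval_interpolate_not_at_node (s := univ) (v := a)
    (fun i => (Lagrange.nodal univ l).eval (a i)) (x := x) (fun i _ => hx i)
  rw [← Lagrange.eq_interpolate ha.injOn
      (by simp [Lagrange.degree_nodal]; exact_mod_cast Nat.lt_succ_self m),
    Lagrange.eval_nodal, Lagrange.eval_nodal] at h
  have hne : ∏ i, (x - a i) ≠ 0 := prod_ne_zero_iff.2 fun i _ => sub_ne_zero.2 (hx i)
  rw [h, mul_div_cancel_left₀ _ hne]
  refine sum_congr rfl fun i _ => ?_
  rw [weightsOfZeros, div_eq_mul_inv, Lagrange.eval_nodal]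
  ring

lemma eq_weightsOfZeros (ha : Function.Injective a) {q : Fin (m + 1) → K} (hq : ∑ i, q i = 1)
    {l : Fin m → K} (hl : Function.Injective l) (hla : ∀ j i, l j ≠ a i)
    (hz : ∀ j, ∑ i, q i / (l j - a i) = 0) :
    q = weightsOfZeros a l := by
  set w := Lagrange.nodalWeight univ a
  have hw : ∀ i, w i ≠ 0 := fun i => Lagrange.nodalWeight_ne_zero ha.injOn (mem_univ i)
  set R := Lagrange.interpolate univ a (fun i => q i / w i)
  have hRa : ∀ i, R.eval (a i) = q i / w i := fun i =>
    Lagrange.eval_interpolate_at_node _ ha.injOn (mem_univ i)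
  have hRdeg : R.degree < ↑(m + 1) := by
    have h := Lagrange.degree_interpolate_lt (s := univ) (fun i => q i / w i) ha.injOn
    rwa [card_univ, Fintype.card_fin] at h
  have hRcoeff : R.coeff m = 1 := by
    have h := Lagrange.coeff_eq_sum (s := univ) ha.injOn
      (Lagrange.degree_interpolate_lt (fun i => q i / w i) ha.injOn)
    change R.coeff (#univ - 1) = ∑ i, R.eval (a i) / _ at h
    simp only [card_univ, Fintype.card_fin, add_tsub_cancel_right, hRa] at h
    rw [h, ← hq]
    refine sum_congr rfl fun i _ => ?_
    have hP : ∏ j ∈ univ.erase i, (a i - a j) ≠ 0 :=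
      prod_ne_zero_iff.2 fun j hj => sub_ne_zero.2 (ha.ne (ne_of_mem_erase hj).symm)
    simp [w, Lagrange.nodalWeight, prod_inv_distrib, hP]
  have hRroot : ∀ j, R.eval (l j) = 0 := fun j => by
    have hsum : ∑ i, w i * (l j - a i)⁻¹ * (q i / w i) = ∑ i, q i / (l j - a i) :=
      sum_congr rfl fun i _ => by field_simp [hw i]
    rw [Lagrange.eval_interpolate_not_at_node _ fun i _ => hla j i, hsum, hz j, mul_zero]
  funext i
  rw [weightsOfZeros, ← Lagrange.eval_nodal, ← eq_nodal_of_coeff_eq_one hRdeg hRcoeff hl hRroot,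
    hRa, mul_div_cancel₀ _ (hw i)]

end Field

variable {a : Fin (m + 1) → ℝ}

def interlacingRegion (a : Fin (m + 1) → ℝ) : Set (Fin m → ℝ) :=
  {l | ∀ j, l j ∈ Set.Ioo (a j.succ) (a j.castSucc)}

lemma measurableSet_interlacingRegion (a : Fin (m + 1) → ℝ) :
    MeasurableSet (interlacingRegion a) := by
  simp only [interlacingRegion, Set.ofPred_forall]
  exact MeasurableSet.iInter fun j => measurableSet_Ioo.preimage (measurable_pi_apply j)

lemma le_of_mem_Ioo_of_le (ha : StrictAnti a) {i k : Fin m} {x y : ℝ}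
    (hx : x ∈ Set.Ioo (a i.succ) (a i.castSucc)) (hy : y ∈ Set.Ioo (a k.succ) (a k.castSucc))
    (hxy : x ≤ y) : k ≤ i := by
  by_contra! hik
  have : a k.castSucc ≤ a i.succ := ha.antitone (Fin.succ_le_castSucc_iff.2 hik)
  linarith [hx.1, hy.2]

lemma strictAnti_of_mem_interlacingRegion (ha : StrictAnti a) {l : Fin m → ℝ}
    (hl : l ∈ interlacingRegion a) : StrictAnti l := fun _ _ hjk =>
  lt_of_not_ge fun h => (le_of_mem_Ioo_of_le ha (hl _) (hl _) h).not_gt hjk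

lemma exists_mem_Ioo {x : ℝ} (hx : ∀ i, x ≠ a i) (h0 : x < a 0) (hlast : a (Fin.last m) < x) :
    ∃ i : Fin m, x ∈ Set.Ioo (a i.succ) (a i.castSucc) := by
  by_contra! h
  have : ∀ i : Fin (m + 1), x < a i := Fin.induction h0 fun i hi =>
    (not_lt.1 fun h' => h i ⟨h', hi⟩).lt_of_ne (hx _)
  exact (this (Fin.last m)).not_gt hlast

lemma sum_div_sub_lt_of_lt {ι : Type*} [Fintype ι] [Nonempty ι] {q b : ι → ℝ}
    (hq : ∀ i, 0 < q i) {x y : ℝ} (hxy : x < y) (hsign : ∀ i, 0 < (x - b i) * (y - b i)) :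
    ∑ i, q i / (y - b i) < ∑ i, q i / (x - b i) := by
  rw [← sub_pos, ← sum_sub_distrib]
  refine sum_pos (fun i _ => ?_) univ_nonempty
  have hx : x - b i ≠ 0 := left_ne_zero_of_mul (hsign i).ne'
  have hy : y - b i ≠ 0 := right_ne_zero_of_mul (hsign i).ne'
  have : q i / (x - b i) - q i / (y - b i) = q i * (y - x) / ((x - b i) * (y - b i)) := by
    field_simp; ring
  rw [this]
  exact div_pos (mul_pos (hq i) (sub_pos.2 hxy)) (hsign i)

section PositiveWeights

variable (ha : StrictAnti a) {q : Fin (m + 1) → ℝ} (hq : ∀ i, 0 < q i)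
include ha hq

lemma exists_mem_Ioo_of_sum_div_sub_eq_zero {x : ℝ} (hx : ∀ i, x ≠ a i)
    (hz : ∑ i, q i / (x - a i) = 0) : ∃ i : Fin m, x ∈ Set.Ioo (a i.succ) (a i.castSucc) := by
  refine exists_mem_Ioo hx (lt_of_not_ge fun h0 => hz.not_gt ?_)
    (lt_of_not_ge fun hlast => hz.not_lt ?_)
  · refine sum_pos (fun i _ => div_pos (hq i) (sub_pos.2 ?_)) univ_nonempty
    exact ((ha.antitone (Fin.zero_le i)).trans h0).lt_of_ne (hx i).symm
  · refine sum_neg (fun i _ => div_neg_of_pos_of_neg (hq i) (sub_neg.2 ?_)) univ_nonempty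
    exact (hlast.trans (ha.antitone (Fin.le_last i))).lt_of_ne (hx i)

lemma eq_of_sum_div_sub_eq_zero {i : Fin m} {x y : ℝ} (hx : x ∈ Set.Ioo (a i.succ) (a i.castSucc))
    (hy : y ∈ Set.Ioo (a i.succ) (a i.castSucc))
    (hzx : ∑ k, q k / (x - a k) = 0) (hzy : ∑ k, q k / (y - a k) = 0) : x = y := by
  have hsign : ∀ {x y : ℝ}, x ∈ Set.Ioo (a i.succ) (a i.castSucc) →
      y ∈ Set.Ioo (a i.succ) (a i.castSucc) → ∀ k, 0 < (x - a k) * (y - a k) := by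
    intro x y hx hy k
    rcases le_or_gt k i.castSucc with hk | hk
    · have := ha.antitone hk
      exact mul_pos_of_neg_of_neg (by linarith [hx.2]) (by linarith [hy.2])
    · have := ha.antitone (Fin.castSucc_lt_iff_succ_le.1 hk)
      exact mul_pos (by linarith [hx.1]) (by linarith [hy.1])
  rcases lt_trichotomy x y with hxy | hxy | hxy
  · exact absurd (hzy ▸ hzx ▸ sum_div_sub_lt_of_lt hq hxy (hsign hx hy)) (lt_irrefl 0)
  · exact hxy
  · exact absurd (hzx ▸ hzy ▸ sum_div_sub_lt_of_lt hq hxy (hsign hy hx)) (lt_irrefl 0)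

lemma mem_interlacingRegion_of_zeros {l : Fin m → ℝ} (hl : StrictAnti l)
    (hla : ∀ j i, l j ≠ a i) (hz : ∀ j, ∑ i, q i / (l j - a i) = 0) :
    l ∈ interlacingRegion a := by
  choose g hg using fun j => exists_mem_Ioo_of_sum_div_sub_eq_zero ha hq (hla j) (hz j)
  have hg_mono : StrictMono g := fun j k hjk =>
    (le_of_mem_Ioo_of_le ha (hg k) (hg j) (hl hjk).le).lt_of_ne fun h =>
      (hl hjk).ne (eq_of_sum_div_sub_eq_zero ha hq (hg k) (h ▸ hg j) (hz k) (hz j))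
  intro j
  simpa [hg_mono.eq_id] using hg j

end PositiveWeights

lemma weightsOfZeros_eq_prod_div (a : Fin (m + 1) → ℝ) (l : Fin m → ℝ) (i : Fin (m + 1)) :
    weightsOfZeros a l i = ∏ j, (a i - l j) / (a i - a (i.succAbove j)) := by
  rw [weightsOfZeros, Lagrange.nodalWeight, prod_erase_eq_prod_succAbove, prod_inv_distrib,
    prod_div_distrib, inv_mul_eq_div]

lemma weightsOfZeros_pos (ha : StrictAnti a) {l : Fin m → ℝ} (hl : l ∈ interlacingRegion a)
    (i : Fin (m + 1)) : 0 < weightsOfZeros a l i := by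
  rw [weightsOfZeros_eq_prod_div]
  refine prod_pos fun j _ => ?_
  rcases lt_or_ge j.castSucc i with h | h
  · rw [Fin.succAbove_of_castSucc_lt _ _ h]
    have := ha.antitone (Fin.castSucc_lt_iff_succ_le.1 h)
    exact div_pos_of_neg_of_neg (by linarith [(hl j).1]) (sub_neg.2 (ha h))
  · rw [Fin.succAbove_of_le_castSucc _ _ h]
    have := ha.antitone h
    exact div_pos (by linarith [(hl j).2])
      (sub_pos.2 (ha (h.trans_lt (Fin.castSucc_lt_succ (i := j)))))

/-- The Dirichlet parameter domain in the coordinates `p = (q₁, …, qₘ)`, `qₘ₊₁ = 1 - Σ p`. -/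
def simplexInterior (m : ℕ) : Set (Fin m → ℝ) :=
  {p | (∀ i, 0 < p i) ∧ ∑ i, p i < 1}

lemma snoc_one_sub_sum_pos {p : Fin m → ℝ} (hp : p ∈ simplexInterior m) (i : Fin (m + 1)) :
    0 < Fin.snoc (α := fun _ => ℝ) p (1 - ∑ j, p j) i := by
  refine Fin.lastCases ?_ (fun j => ?_) i
  · rw [Fin.snoc_last]; linarith [hp.2]
  · rw [Fin.snoc_castSucc]; exact hp.1 j

lemma sum_snoc_one_sub_sum (p : Fin m → ℝ) :
    ∑ i, Fin.snoc (α := fun _ => ℝ) p (1 - ∑ j, p j) i = 1 := by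
  rw [Fin.sum_snoc]; ring

lemma snoc_init_one_sub_sum {q : Fin (m + 1) → ℝ} (hq : ∑ i, q i = 1) :
    Fin.snoc (α := fun _ => ℝ) (Fin.init q) (1 - ∑ j, Fin.init q j) = q := by
  rw [Fin.sum_univ_castSucc] at hq
  conv_rhs => rw [← Fin.snoc_init_self q]
  congr 1
  change 1 - ∑ j : Fin m, q j.castSucc = q (Fin.last m)
  linarith

lemma init_mem_simplexInterior {q : Fin (m + 1) → ℝ} (hq : ∀ i, 0 < q i) (hsum : ∑ i, q i = 1) :
    Fin.init q ∈ simplexInterior m := by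
  rw [Fin.sum_univ_castSucc] at hsum
  exact ⟨fun j => hq j.castSucc, show ∑ j : Fin m, q j.castSucc < 1 by linarith [hq (Fin.last m)]⟩

lemma mapsTo_init_weightsOfZeros (ha : StrictAnti a) :
    Set.MapsTo (fun l => Fin.init (weightsOfZeros a l)) (interlacingRegion a)
      (simplexInterior m) := fun _ hl =>
  init_mem_simplexInterior (weightsOfZeros_pos ha hl) (sum_weightsOfZeros ha.injective _)

def IsSortedZerosMap (a : Fin (m + 1) → ℝ) (Λ : (Fin m → ℝ) → Fin m → ℝ) : Prop :=
  ∀ p ∈ simplexInterior m, StrictAnti (Λ p) ∧ (∀ j i, Λ p j ≠ a i) ∧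
    ∀ j, ∑ i, Fin.snoc (α := fun _ => ℝ) p (1 - ∑ i, p i) i / (Λ p j - a i) = 0

namespace IsSortedZerosMap

variable {Λ : (Fin m → ℝ) → Fin m → ℝ} (hΛ : IsSortedZerosMap a Λ) (ha : StrictAnti a)
include hΛ ha

lemma mapsTo : Set.MapsTo Λ (simplexInterior m) (interlacingRegion a) := fun p hp =>
  let ⟨hanti, hne, hz⟩ := hΛ p hp
  mem_interlacingRegion_of_zeros ha (snoc_one_sub_sum_pos hp) hanti hne hz

lemma invOn : Set.InvOn (fun l => Fin.init (weightsOfZeros a l)) Λ (simplexInterior m)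
    (interlacingRegion a) := by
  refine ⟨fun p hp => ?_, fun l hl => ?_⟩
  · obtain ⟨hanti, hne, hz⟩ := hΛ p hp
    simp only
    rw [← eq_weightsOfZeros ha.injective (sum_snoc_one_sub_sum p) hanti.injective hne hz,
      Fin.init_snoc]
  · have hp := mapsTo_init_weightsOfZeros ha hl
    obtain ⟨-, hne, hz⟩ := hΛ _ hp
    have hΛV := hΛ.mapsTo ha hp
    funext j
    have hzj := hz j
    rw [snoc_init_one_sub_sum (sum_weightsOfZeros ha.injective l),
      sum_weightsOfZeros_div_sub ha.injective l (hne j), div_eq_zero_iff,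
      or_iff_left (prod_ne_zero_iff.2 fun i _ => sub_ne_zero.2 (hne j i)),
      prod_eq_zero_iff] at hzj
    obtain ⟨k, -, hk⟩ := hzj
    rw [sub_eq_zero] at hk
    have hkj := le_antisymm (le_of_mem_Ioo_of_le ha (hΛV j) (hk ▸ hl k) le_rfl)
      (le_of_mem_Ioo_of_le ha (hk ▸ hl k) (hΛV j) le_rfl)
    rw [hk, hkj]

end IsSortedZerosMap

lemma abs_nodalWeight_last (a : Fin (m + 1) → ℝ) :
    |Lagrange.nodalWeight univ a (Fin.last m)| =
      (∏ j : Fin m, |a j.castSucc - a (Fin.last m)|)⁻¹ := by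
  simp [Lagrange.nodalWeight, prod_erase_eq_prod_succAbove, abs_prod, abs_sub_comm]

lemma prod_abs_nodalWeight_castSucc_mul_abs_det (ha : Function.Injective a) :
    (∏ j : Fin m, |Lagrange.nodalWeight univ a j.castSucc|) *
      |(vandermonde fun j => a j.castSucc).det| = |(vandermonde a).det|⁻¹ := by
  have hV : |(vandermonde a).det| ≠ 0 := abs_ne_zero.2 (det_vandermonde_ne_zero_iff.2 ha)
  have hL : ∏ j : Fin m, |a j.castSucc - a (Fin.last m)| ≠ 0 := prod_ne_zero_iff.2 fun j _ =>
    abs_ne_zero.2 (sub_ne_zero.2 (ha.ne (Fin.castSucc_lt_last j).ne))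
  have hall := prod_abs_nodalWeight_pow a 1
  simp only [Pi.one_apply, pow_one, prod_pow, ← abs_det_vandermonde] at hall
  rw [Fin.prod_univ_castSucc, abs_nodalWeight_last] at hall
  have hlast := abs_det_vandermonde_castSucc a
  field_simp at hall ⊢
  refine mul_right_cancel₀ hL ?_
  linear_combination hall - (∏ j : Fin m, |Lagrange.nodalWeight univ a j.castSucc|) *
    |(vandermonde a).det| * hlast

lemma prod_prod_Ioi_sub_pow_eq (ha : StrictAnti a) {s : Fin (m + 1) → ℕ} (hs : ∀ i, 1 ≤ s i) :
    ∏ j, ∏ k ∈ Ioi j, (a j - a k) ^ (s j + s k - 1) =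
      (∏ i, |Lagrange.nodalWeight univ a i| ^ (s i - 1))⁻¹ * |(vandermonde a).det| := by
  rw [prod_abs_nodalWeight_pow, inv_inv, abs_det_vandermonde, ← prod_mul_distrib]
  refine prod_congr rfl fun j _ => ?_
  rw [← prod_mul_distrib]
  refine prod_congr rfl fun k hk => ?_
  rw [abs_of_pos (sub_pos.2 (ha (mem_Ioi.1 hk))), ← pow_succ]
  congr 1
  have := hs j
  have := hs k
  omega

lemma prod_init_pow_mul_one_sub_sum_pow {q : Fin (m + 1) → ℝ} (hq : ∑ i, q i = 1)
    (s : Fin (m + 1) → ℕ) :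
    (∏ i : Fin m, Fin.init q i ^ (s i.castSucc - 1)) *
      (1 - ∑ i, Fin.init q i) ^ (s (Fin.last m) - 1) = ∏ i, q i ^ (s i - 1) := by
  have hlast := congrFun (snoc_init_one_sub_sum hq) (Fin.last m)
  rw [Fin.snoc_last] at hlast
  rw [hlast, Fin.prod_univ_castSucc]
  rfl

lemma weightsOfZeros_eq_abs_mul_prod_abs (ha : StrictAnti a) {l : Fin m → ℝ}
    (hl : l ∈ interlacingRegion a) (i : Fin (m + 1)) :
    weightsOfZeros a l i = |Lagrange.nodalWeight univ a i| * ∏ j, |l j - a i| := by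
  rw [← abs_of_pos (weightsOfZeros_pos ha hl i), weightsOfZeros, abs_mul, abs_prod]
  simp_rw [abs_sub_comm (a i)]

lemma abs_det_jacobian_mul_density (ha : StrictAnti a) {s : Fin (m + 1) → ℕ}
    (hs : ∀ i, 1 ≤ s i) {l : Fin m → ℝ} (hl : l ∈ interlacingRegion a) :
    |(of fun j k => -(Lagrange.nodalWeight univ a j.castSucc *
        ∏ k' ∈ univ.erase k, (a j.castSucc - l k'))).det| *
      ((∏ i : Fin m, Fin.init (weightsOfZeros a l) i ^ (s i.castSucc - 1)) *
        (1 - ∑ i, Fin.init (weightsOfZeros a l) i) ^ (s (Fin.last m) - 1)) =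
    (∏ j, ∏ k ∈ Ioi j, (l j - l k)) / (∏ j, ∏ k ∈ Ioi j, (a j - a k) ^ (s j + s k - 1)) *
      ∏ j, ∏ i, |l j - a i| ^ (s i - 1) := by
  have hlanti := strictAnti_of_mem_interlacingRegion ha hl
  rw [prod_init_pow_mul_one_sub_sum_pow (sum_weightsOfZeros ha.injective l),
    abs_det_punctured_prod_jacobian (fun j => Lagrange.nodalWeight univ a j.castSucc)
      (fun j => a j.castSucc) hlanti.injective,
    prod_abs_nodalWeight_castSucc_mul_abs_det ha.injective, prod_prod_Ioi_sub_pow_eq ha hs,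
    abs_det_vandermonde_of_strictAnti hlanti, prod_comm (s := univ) (t := univ)]
  simp_rw [weightsOfZeros_eq_abs_mul_prod_abs ha hl, mul_pow, prod_mul_distrib, prod_pow]
  field_simp

end RationalZeros

open RationalZeros

theorem stmt17_general (m : ℕ) (a : Fin (m + 1) → ℝ) (ha : StrictAnti a)
    (s : Fin (m + 1) → ℕ) (hs : ∀ i, 1 ≤ s i)
    (Λ : (Fin m → ℝ) → (Fin m → ℝ)) (hmeas : Measurable Λ)
    (hΛ : ∀ p : Fin m → ℝ, ((∀ i, 0 < p i) ∧ ∑ i, p i < 1) →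
      StrictAnti (Λ p) ∧ (∀ j i, Λ p j ≠ a i) ∧
        (∀ j : Fin m,
          ∑ i : Fin (m + 1), (Fin.snoc (α := fun _ => ℝ) p (1 - ∑ i, p i) i) / (Λ p j - a i) = 0)) :
    (∀ p : Fin m → ℝ, ((∀ i, 0 < p i) ∧ ∑ i, p i < 1) →
      ∀ j : Fin m, a j.succ < Λ p j ∧ Λ p j < a j.castSucc) ∧
    Measure.map Λ
      (volume.withDensity (fun p : Fin m → ℝ => ENNReal.ofReal (
        if (∀ i, 0 < p i) ∧ ∑ i, p i < 1 then
          (Real.Gamma (∑ i, (s i : ℝ)) / ∏ i, Real.Gamma (s i : ℝ)) *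
            ((∏ i : Fin m, p i ^ (s i.castSucc - 1)) *
              (1 - ∑ i, p i) ^ (s (Fin.last m) - 1))
        else 0))) =
    volume.withDensity (fun lam : Fin m → ℝ => ENNReal.ofReal (
      if ∀ j : Fin m, a j.succ < lam j ∧ lam j < a j.castSucc then
        (Real.Gamma (∑ i, (s i : ℝ)) / ∏ i, Real.Gamma (s i : ℝ)) *
          (∏ j : Fin m, ∏ k ∈ Finset.univ.filter (fun k => j < k), (lam j - lam k)) /
          (∏ j : Fin (m + 1), ∏ k ∈ Finset.univ.filter (fun k => j < k),
            (a j - a k) ^ (s j + s k - 1)) *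
          ∏ j : Fin m, ∏ i : Fin (m + 1), |lam j - a i| ^ (s i - 1)
      else 0)) := by
  have hΛ' : IsSortedZerosMap a Λ := hΛ
  refine ⟨fun p hp => hΛ'.mapsTo ha hp, ?_⟩
  refine map_withDensity_eq_withDensity_of_invOn (Ψ := fun l => Fin.init (weightsOfZeros a l))
    hmeas (measurableSet_interlacingRegion a)
    (fun l _ => (hasFDerivAt_mul_prod_sub (fun j => Lagrange.nodalWeight univ a j.castSucc)
      (fun j => a j.castSucc) l).hasFDerivWithinAt) (hΛ'.mapsTo ha)
    (mapsTo_init_weightsOfZeros ha) (hΛ'.invOn ha)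
    (fun p hp => by simp only [simplexInterior, Set.mem_ofPred_eq] at hp; simp [hp])
    (fun l hl => by simp only [interlacingRegion, Set.mem_ofPred_eq, Set.mem_Ioo] at hl; simp [hl])
    fun l hl => ?_
  have hlU := mapsTo_init_weightsOfZeros ha hl
  simp only [interlacingRegion, simplexInterior, Set.mem_ofPred_eq, Set.mem_Ioo] at hl hlU
  rw [if_pos hl, if_pos hlU, ← ENNReal.ofReal_mul (abs_nonneg _), ContinuousLinearMap.det,
    LinearMap.coe_toContinuousLinearMap, LinearMap.det_toLin']
  congr 1
  simp only [filter_lt_eq_Ioi]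
  linear_combination (Real.Gamma (∑ i, (s i : ℝ)) / ∏ i, Real.Gamma (s i : ℝ)) *
    (abs_det_jacobian_mul_density ha hs hl).symm

/-- Zeros of the random rational function `Σ_i q_i/(x - a_i)` with Dirichlet distributed
`(q_1,…,q_{m+1}) ~ D[s_1,…,s_{m+1}]`: the `m` zeros `λ_1 > … > λ_m` interlace with the
`a_i`, and their joint density on the interlacing region is
`Γ(Σs)/(∏Γ(s_i)) ∏_{j<k}(λ_j-λ_k) / ∏_{j<k}(a_j-a_k)^{s_j+s_k-1} ∏_{j,p}|λ_j-a_p|^{s_p-1}`.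
The Dirichlet distribution is realized by its density in the first `m` coordinates
`p = (q_1,…,q_m)`, with `q_{m+1} = 1 - Σ p`, and `Λ p` denotes the ordered zeros. -/
theorem stmt17 (m : ℕ) (hm : 1 ≤ m) (a : Fin (m + 1) → ℝ) (ha : StrictAnti a)
    (s : Fin (m + 1) → ℕ) (hs : ∀ i, 1 ≤ s i)
    (Λ : (Fin m → ℝ) → (Fin m → ℝ)) (hmeas : Measurable Λ)
    (hΛ : ∀ p : Fin m → ℝ, ((∀ i, 0 < p i) ∧ ∑ i, p i < 1) →
      StrictAnti (Λ p) ∧ (∀ j i, Λ p j ≠ a i) ∧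
        (∀ j : Fin m,
          ∑ i : Fin (m + 1), (Fin.snoc (α := fun _ => ℝ) p (1 - ∑ i, p i) i) / (Λ p j - a i) = 0)) :
    (∀ p : Fin m → ℝ, ((∀ i, 0 < p i) ∧ ∑ i, p i < 1) →
      ∀ j : Fin m, a j.succ < Λ p j ∧ Λ p j < a j.castSucc) ∧
    Measure.map Λ
      (volume.withDensity (fun p : Fin m → ℝ => ENNReal.ofReal (
        if (∀ i, 0 < p i) ∧ ∑ i, p i < 1 then
          (Real.Gamma (∑ i, (s i : ℝ)) / ∏ i, Real.Gamma (s i : ℝ)) *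
            ((∏ i : Fin m, p i ^ (s i.castSucc - 1)) *
              (1 - ∑ i, p i) ^ (s (Fin.last m) - 1))
        else 0))) =
    volume.withDensity (fun lam : Fin m → ℝ => ENNReal.ofReal (
      if ∀ j : Fin m, a j.succ < lam j ∧ lam j < a j.castSucc then
        (Real.Gamma (∑ i, (s i : ℝ)) / ∏ i, Real.Gamma (s i : ℝ)) *
          (∏ j : Fin m, ∏ k ∈ Finset.univ.filter (fun k => j < k), (lam j - lam k)) /
          (∏ j : Fin (m + 1), ∏ k ∈ Finset.univ.filter (fun k => j < k),
            (a j - a k) ^ (s j + s k - 1)) *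
          ∏ j : Fin m, ∏ i : Fin (m + 1), |lam j - a i| ^ (s i - 1)
      else 0)) :=
  stmt17_general m a ha s hs Λ hmeas hΛ
end
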